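/- Let n ≥ 1, let g ∈ ℝ, and let U ⊆ ℝ × ℝⁿ be open. Let v : ℝ × ℝⁿ → ℝⁿ and p : ℝ × ℝⁿ → ℝ be three times continuously differentiable, and suppose that at every point of U the Euler equations hold, ∂_t v_k + Σ_j v_j ∂_j v_k = −∂_k p − g·δ_{kn} for every 1 ≤ k ≤ n, together with Σ_j ∂_j v_j = 0 on U. Then at every point of U: Δ( ∂_t p + Σ_j v_j ∂_j p ) = 4 Σ_{i,j} ∂_i ∂_j p · ∂_j v_i + 2 Σ_{i,j,k} ∂_i v_j · ∂_j v_k · ∂_k v_i + Σ_j Δv_j · ∂_j p. -/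

import Mathlib

/-!
Write `D_t = ∂_t + v·∇`. Differentiating the Euler equation `D_t v_k = -∂_k p - c_k` along `e_j`
gives `D_t ∂_j v_k + Σ_m ∂_j v_m ∂_m v_k = -∂_j ∂_k p` on `U`. Its trace, with `div v = 0`, is the
pressure Poisson equation `Δp = -tr((Dv)²)`; applying `D_t` to it and substituting the first
identity once more gives `D_t Δp = 2 tr(D²p·Dv) + 2 tr((Dv)³)`. The theorem then follows from
the commutator identity `Δ(D_t f) = D_t Δf + ⟨Δv, ∇f⟩ + 2 tr(D²f·Dv)`.
-/

open Set Finset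

/-- Time partial derivative of a function on `ℝ × ℝⁿ`. -/
noncomputable def pdt {n : ℕ} (f : ℝ × (Fin n → ℝ) → ℝ) (q : ℝ × (Fin n → ℝ)) : ℝ :=
  fderiv ℝ f q (1, 0)

/-- Spatial partial derivative in the `i`-th coordinate of a function on `ℝ × ℝⁿ`. -/
noncomputable def pdx {n : ℕ} (i : Fin n) (f : ℝ × (Fin n → ℝ) → ℝ)
    (q : ℝ × (Fin n → ℝ)) : ℝ :=
  fderiv ℝ f q (0, Pi.single i 1)


section DirectionalDerivative

variable {E : Type*} [NormedAddCommGroup E] [NormedSpace ℝ E]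

noncomputable def pd (w : E) (f : E → ℝ) (q : E) : ℝ := fderiv ℝ f q w

@[fun_prop]
theorem ContDiff.pd {f : E → ℝ} {k : WithTop ℕ∞} (hf : ContDiff ℝ (k + 1) f) (w : E) :
    ContDiff ℝ k (pd w f) :=
  (ContinuousLinearMap.apply ℝ ℝ w).contDiff.comp (hf.fderiv_right le_rfl)

variable {f g : E → ℝ} (w : E)

theorem pd_neg : pd w (fun r => -f r) = fun r => -pd w f r := by
  funext q; simp [pd]

theorem pd_sub_const (c : ℝ) : pd w (fun r => f r - c) = pd w f := by
  funext q; simp [pd, fderiv_sub_const]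

theorem pd_add (hf : Differentiable ℝ f) (hg : Differentiable ℝ g) :
    pd w (fun r => f r + g r) = fun r => pd w f r + pd w g r := by
  funext q; simp [pd, fderiv_fun_add (hf q) (hg q)]

theorem pd_mul (hf : Differentiable ℝ f) (hg : Differentiable ℝ g) :
    pd w (fun r => f r * g r) = fun r => pd w f r * g r + f r * pd w g r := by
  funext q; simp [pd, fderiv_fun_mul (hf q) (hg q)]; ring

theorem pd_sum {ι : Type*} (s : Finset ι) {F : ι → E → ℝ}
    (hF : ∀ i ∈ s, Differentiable ℝ (F i)) :
    pd w (fun r => ∑ i ∈ s, F i r) = fun r => ∑ i ∈ s, pd w (F i) r := by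
  funext q; simp [pd, fderiv_fun_sum fun i hi => hF i hi q]

theorem pd_comm (hf : ContDiff ℝ 2 f) (u : E) : pd w (pd u f) = pd u (pd w f) := by
  funext q
  have hd : DifferentiableAt ℝ (fderiv ℝ f) q :=
    (hf.fderiv_right (m := 1) le_rfl).differentiable one_ne_zero q
  have key (a b : E) : pd b (pd a f) q = fderiv ℝ (fderiv ℝ f) q b a := by
    change fderiv ℝ (fun r => fderiv ℝ f r a) q b = _
    simp [fderiv_clm_apply hd (differentiableAt_const a)]
  rw [key, key, (hf.contDiffAt.isSymmSndFDerivAt (by simp)) w u]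

theorem Set.EqOn.pd {U : Set E} (h : EqOn f g U) (hU : IsOpen U) :
    EqOn (pd w f) (pd w g) U := fun q hq => by
  simp only [_root_.pd, (Filter.eventuallyEq_of_mem (hU.mem_nhds hq) h).fderiv_eq]

end DirectionalDerivative

section MaterialDerivative

variable {n : ℕ}

def et : ℝ × (Fin n → ℝ) := (1, 0)

def ex (i : Fin n) : ℝ × (Fin n → ℝ) := (0, Pi.single i 1)

noncomputable def materialDeriv (v : ℝ × (Fin n → ℝ) → Fin n → ℝ) (f : ℝ × (Fin n → ℝ) → ℝ)
    (r : ℝ × (Fin n → ℝ)) : ℝ :=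
  pd et f r + ∑ j, v r j * pd (ex j) f r

noncomputable def spatialLaplacian (f : ℝ × (Fin n → ℝ) → ℝ) (r : ℝ × (Fin n → ℝ)) : ℝ :=
  ∑ i, pd (ex i) (pd (ex i) f) r

variable (v : ℝ × (Fin n → ℝ) → Fin n → ℝ) {f g : ℝ × (Fin n → ℝ) → ℝ}

theorem materialDeriv_zero : materialDeriv v 0 = 0 := by
  funext r; simp [materialDeriv, pd]

theorem materialDeriv_neg : materialDeriv v (fun r => -f r) = fun r => -materialDeriv v f r := by
  funext r; simp [materialDeriv, pd_neg]; ring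

theorem materialDeriv_mul (hf : Differentiable ℝ f) (hg : Differentiable ℝ g) :
    materialDeriv v (fun r => f r * g r)
      = fun r => materialDeriv v f r * g r + f r * materialDeriv v g r := by
  funext r
  simp only [materialDeriv, pd_mul _ hf hg, mul_add, add_mul, sum_add_distrib,
    mul_sum, sum_mul]
  ring_nf

theorem materialDeriv_sum {ι : Type*} (s : Finset ι) {F : ι → ℝ × (Fin n → ℝ) → ℝ}
    (hF : ∀ i ∈ s, Differentiable ℝ (F i)) :
    materialDeriv v (fun r => ∑ i ∈ s, F i r) = fun r => ∑ i ∈ s, materialDeriv v (F i) r := by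
  funext r
  simp only [materialDeriv, pd_sum _ s hF, sum_add_distrib, mul_sum]
  rw [sum_comm]

theorem Set.EqOn.materialDeriv {U : Set (ℝ × (Fin n → ℝ))} (h : EqOn f g U) (hU : IsOpen U) :
    EqOn (materialDeriv v f) (materialDeriv v g) U := fun r hr => by
  simp only [_root_.materialDeriv, h.pd et hU hr, fun j => h.pd (ex j) hU hr]

theorem pd_materialDeriv (hv : ∀ j, Differentiable ℝ (fun r => v r j)) (hf : ContDiff ℝ 2 f)
    (w : ℝ × (Fin n → ℝ)) :
    pd w (materialDeriv v f)
      = fun r => materialDeriv v (pd w f) r + ∑ j, pd w (fun r => v r j) r * pd (ex j) f r := by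
  have hdf : ∀ u, Differentiable ℝ (pd u f) := fun u => by fun_prop (disch := norm_num)
  have hprod : ∀ j ∈ Finset.univ, Differentiable ℝ (fun r => v r j * pd (ex j) f r) :=
    fun j _ => (hv j).mul (hdf _)
  change pd w (fun r => pd et f r + ∑ j, v r j * pd (ex j) f r) = _
  rw [pd_add w (hdf et) (Differentiable.fun_sum hprod), pd_sum w _ hprod]
  funext r
  simp only [materialDeriv, pd_mul w (hv _) (hdf _), pd_comm w hf, sum_add_distrib]
  ring

theorem differentiable_materialDeriv (hv : ∀ j, Differentiable ℝ (fun r => v r j))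
    (hf : ContDiff ℝ 2 f) : Differentiable ℝ (materialDeriv v f) := by
  unfold materialDeriv
  fun_prop (disch := norm_num)

theorem spatialLaplacian_materialDeriv (hv : ∀ j, ContDiff ℝ 2 (fun r => v r j))
    (hf : ContDiff ℝ 3 f) :
    spatialLaplacian (materialDeriv v f)
      = fun r => materialDeriv v (spatialLaplacian f) r
          + ∑ j, spatialLaplacian (fun r => v r j) r * pd (ex j) f r
          + 2 * ∑ i, ∑ j, pd (ex i) (pd (ex j) f) r * pd (ex j) (fun r => v r i) r := by
  have hv1 : ∀ j, Differentiable ℝ (fun r => v r j) :=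
    fun j => (hv j).differentiable (by norm_num)
  have hdv : ∀ u j, Differentiable ℝ (pd u (fun r => v r j)) := by fun_prop (disch := norm_num)
  have hf2 : ContDiff ℝ 2 f := hf.of_le (by norm_num)
  have hdf : ∀ u, ContDiff ℝ 2 (pd u f) := fun u => hf.pd u
  have hddf : ∀ u w, Differentiable ℝ (pd w (pd u f)) := by fun_prop (disch := norm_num)
  have hprod : ∀ i, ∀ j ∈ Finset.univ,
      Differentiable ℝ (fun r => pd (ex i) (fun r => v r j) r * pd (ex j) f r) :=
    fun i j _ => by fun_prop (disch := norm_num)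
  have second (i : Fin n) : pd (ex i) (pd (ex i) (materialDeriv v f))
      = fun r => materialDeriv v (pd (ex i) (pd (ex i) f)) r
        + ∑ j, pd (ex i) (pd (ex i) (fun r => v r j)) r * pd (ex j) f r
        + 2 * ∑ j, pd (ex i) (fun r => v r j) r * pd (ex i) (pd (ex j) f) r := by
    rw [pd_materialDeriv v hv1 hf2, pd_add _ (differentiable_materialDeriv v hv1 (hdf _))
      (Differentiable.fun_sum (hprod i)), pd_materialDeriv v hv1 (hdf _), pd_sum _ _ (hprod i)]
    funext r
    simp only [pd_mul _ (hdv _ _) ((hdf _).differentiable (by norm_num)), pd_comm _ hf2 (ex i),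
      sum_add_distrib]
    ring
  have hsum : materialDeriv v (spatialLaplacian f)
      = fun r => ∑ i, materialDeriv v (pd (ex i) (pd (ex i) f)) r :=
    materialDeriv_sum v Finset.univ fun i _ => hddf _ _
  funext r
  have htrace : ∑ i, ∑ j, pd (ex i) (fun r => v r j) r * pd (ex i) (pd (ex j) f) r
      = ∑ i, ∑ j, pd (ex i) (pd (ex j) f) r * pd (ex j) (fun r => v r i) r := by
    rw [sum_comm]
    exact sum_congr rfl fun i _ => sum_congr rfl fun j _ => by
      rw [pd_comm _ hf2 (ex i), mul_comm]
  simp only [spatialLaplacian, second, hsum, sum_add_distrib, ← mul_sum, htrace,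
    sum_mul]
  congr 2
  exact sum_comm

end MaterialDerivative

section Euler

variable {n : ℕ} {U : Set (ℝ × (Fin n → ℝ))} {v : ℝ × (Fin n → ℝ) → Fin n → ℝ}
  {p : ℝ × (Fin n → ℝ) → ℝ} {c : Fin n → ℝ}

theorem materialDeriv_pd_velocity_eqOn (hU : IsOpen U) (hv : ∀ j, ContDiff ℝ 2 (fun r => v r j))
    (heuler : ∀ k, EqOn (materialDeriv v (fun r => v r k)) (fun r => -pd (ex k) p r - c k) U)
    (j k : Fin n) :
    EqOn (fun r => materialDeriv v (pd (ex j) (fun r => v r k)) r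
        + ∑ m, pd (ex j) (fun r => v r m) r * pd (ex m) (fun r => v r k) r)
      (fun r => -pd (ex j) (pd (ex k) p) r) U := by
  have h := (heuler k).pd (ex j) hU
  rwa [pd_materialDeriv v (fun j => (hv j).differentiable (by norm_num)) (hv k), pd_sub_const,
    pd_neg] at h

theorem spatialLaplacian_pressure_eqOn (hU : IsOpen U) (hv : ∀ j, ContDiff ℝ 2 (fun r => v r j))
    (heuler : ∀ k, EqOn (materialDeriv v (fun r => v r k)) (fun r => -pd (ex k) p r - c k) U)
    (hdiv : EqOn (fun r => ∑ j, pd (ex j) (fun r => v r j) r) 0 U) :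
    EqOn (spatialLaplacian p)
      (fun r => -∑ j, ∑ k, pd (ex j) (fun r => v r k) r * pd (ex k) (fun r => v r j) r) U := by
  intro r hr
  have hdv : ∀ u j, Differentiable ℝ (pd u (fun r => v r j)) := by fun_prop (disch := norm_num)
  have hdivD : ∑ k, materialDeriv v (pd (ex k) (fun r => v r k)) r = 0 := by
    rw [← congrFun (materialDeriv_sum v Finset.univ fun k _ => hdv _ k) r,
      hdiv.materialDeriv v hU hr, materialDeriv_zero, Pi.zero_apply]
  have hsum := sum_congr rfl fun k (_ : k ∈ Finset.univ) =>
    materialDeriv_pd_velocity_eqOn hU hv heuler k k hr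
  simp only [sum_add_distrib, hdivD, zero_add, sum_neg_distrib] at hsum
  simp only [hsum, neg_neg]
  rfl

theorem materialDeriv_spatialLaplacian_pressure_eqOn (hU : IsOpen U)
    (hv : ∀ j, ContDiff ℝ 2 (fun r => v r j))
    (heuler : ∀ k, EqOn (materialDeriv v (fun r => v r k)) (fun r => -pd (ex k) p r - c k) U)
    (hdiv : EqOn (fun r => ∑ j, pd (ex j) (fun r => v r j) r) 0 U) :
    EqOn (materialDeriv v (spatialLaplacian p))
      (fun r => 2 * ∑ i, ∑ j, pd (ex i) (pd (ex j) p) r * pd (ex j) (fun r => v r i) r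
        + 2 * ∑ i, ∑ j, ∑ k, pd (ex i) (fun r => v r j) r * pd (ex j) (fun r => v r k) r
            * pd (ex k) (fun r => v r i) r) U := by
  intro r hr
  have hdv : ∀ u j, Differentiable ℝ (pd u (fun r => v r j)) := by fun_prop (disch := norm_num)
  have hprod : ∀ j k, Differentiable ℝ
      (fun r => pd (ex j) (fun r => v r k) r * pd (ex k) (fun r => v r j) r) :=
    fun j k => (hdv _ _).mul (hdv _ _)
  have hD (j k : Fin n) : materialDeriv v (pd (ex j) (fun r => v r k)) r
      = -pd (ex j) (pd (ex k) p) r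
        - ∑ m, pd (ex j) (fun r => v r m) r * pd (ex m) (fun r => v r k) r :=
    eq_sub_of_add_eq (materialDeriv_pd_velocity_eqOn hU hv heuler j k hr)
  rw [(spatialLaplacian_pressure_eqOn hU hv heuler hdiv).materialDeriv v hU hr, materialDeriv_neg,
    materialDeriv_sum v _ fun j _ => Differentiable.fun_sum fun k _ => hprod j k]
  simp only [materialDeriv_sum v _ fun k _ => hprod _ k, materialDeriv_mul v (hdv _ _) (hdv _ _)]
  have hswap :
      ∑ j, ∑ k, pd (ex j) (fun r => v r k) r * materialDeriv v (pd (ex k) (fun r => v r j)) r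
        = ∑ j, ∑ k, materialDeriv v (pd (ex j) (fun r => v r k)) r
            * pd (ex k) (fun r => v r j) r := by
    rw [sum_comm]
    exact sum_congr rfl fun j _ => sum_congr rfl fun k _ => mul_comm _ _
  have hcube : ∑ j, ∑ k, (∑ m, pd (ex j) (fun r => v r m) r * pd (ex m) (fun r => v r k) r)
        * pd (ex k) (fun r => v r j) r
      = ∑ i, ∑ j, ∑ k, pd (ex i) (fun r => v r j) r * pd (ex j) (fun r => v r k) r
          * pd (ex k) (fun r => v r i) r := by
    simp only [sum_mul]
    exact sum_congr rfl fun i _ => sum_comm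
  rw [sum_congr rfl fun j _ => sum_add_distrib, sum_add_distrib, hswap]
  simp only [hD, sub_mul, neg_mul, sum_sub_distrib, sum_neg_distrib, hcube]
  ring

end Euler

theorem laplacian_material_derivative_pressure_general {n : ℕ} (g : ℝ)
    (U : Set (ℝ × (Fin n → ℝ))) (hU : IsOpen U)
    (v : ℝ × (Fin n → ℝ) → Fin n → ℝ) (p : ℝ × (Fin n → ℝ) → ℝ)
    (hv : ContDiff ℝ 3 v) (hp : ContDiff ℝ 3 p)
    (heuler : ∀ q ∈ U, ∀ k : Fin n,
      pdt (fun r => v r k) q + ∑ j, v q j * pdx j (fun r => v r k) q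
        = -pdx k p q - (if (k : ℕ) = n - 1 then g else 0))
    (hdiv : ∀ q ∈ U, ∑ j, pdx j (fun r => v r j) q = 0) :
    ∀ q ∈ U,
      ∑ i, pdx i (pdx i (fun r => pdt p r + ∑ j, v r j * pdx j p r)) q
        = 4 * ∑ i, ∑ j, pdx i (pdx j p) q * pdx j (fun r => v r i) q
          + 2 * ∑ i, ∑ j, ∑ k, pdx i (fun r => v r j) q * pdx j (fun r => v r k) q
              * pdx k (fun r => v r i) q
          + ∑ j, (∑ i, pdx i (pdx i (fun r => v r j)) q) * pdx j p q := by
  have hv2 : ∀ j, ContDiff ℝ 2 (fun r => v r j) :=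
    fun j => (contDiff_pi.mp hv j).of_le (by norm_num)
  have hDΔp := materialDeriv_spatialLaplacian_pressure_eqOn hU hv2
    (c := fun k => if (k : ℕ) = n - 1 then g else 0) (fun k q hq => heuler q hq k) hdiv
  intro q hq
  calc _ = spatialLaplacian (materialDeriv v p) q := rfl
    -- `ring!` compares atoms up to unfolding, identifying `pdx i` with `pd (ex i)`
    _ = _ := by simp only [spatialLaplacian_materialDeriv v hv2 hp, hDΔp hq]; ring!

/-- Laplacian of the material derivative of the pressure of an incompressible Euler
flow: `Δ(D_t p) = 4 tr(D²p·Dv) + 2 tr((Dv)³) + ⟨Δv, ∇p⟩`. -/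
theorem laplacian_material_derivative_pressure {n : ℕ} (hn : 1 ≤ n) (g : ℝ)
    (U : Set (ℝ × (Fin n → ℝ))) (hU : IsOpen U)
    (v : ℝ × (Fin n → ℝ) → Fin n → ℝ) (p : ℝ × (Fin n → ℝ) → ℝ)
    (hv : ContDiff ℝ 3 v) (hp : ContDiff ℝ 3 p)
    (heuler : ∀ q ∈ U, ∀ k : Fin n,
      pdt (fun r => v r k) q + ∑ j, v q j * pdx j (fun r => v r k) q
        = -pdx k p q - (if (k : ℕ) = n - 1 then g else 0))
    (hdiv : ∀ q ∈ U, ∑ j, pdx j (fun r => v r j) q = 0) :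
    ∀ q ∈ U,
      ∑ i, pdx i (pdx i (fun r => pdt p r + ∑ j, v r j * pdx j p r)) q
        = 4 * ∑ i, ∑ j, pdx i (pdx j p) q * pdx j (fun r => v r i) q
          + 2 * ∑ i, ∑ j, ∑ k, pdx i (fun r => v r j) q * pdx j (fun r => v r k) q
              * pdx k (fun r => v r i) q
          + ∑ j, (∑ i, pdx i (pdx i (fun r => v r j)) q) * pdx j p q :=
  laplacian_material_derivative_pressure_general g U hU v p hv hp heuler hdiv
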